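/- arXiv:1907.07096 — 2 statements merged into one kernel-verified Lean document; each statement's English description precedes it below -/
import Mathlib

section
/- Let a ∈ (0, 6π) with a ≤ 2π, and for x ∈ [0, a) define f(x) = Perim₄(x) + Perim₈(a − x), where Perim_N(t) = 2N·arcosh(cos(π/N)/sin(((N−2)π − t)/(2N))) for t > 0 and Perim_N(0) = 0. Then f attains its minimum at x = 0, i.e., f(x) ≥ Perim₈(a) for all x ∈ [0, a). -/
open Real

noncomputable def arcosh (x : ℝ) : ℝ := Real.log (x + Real.sqrt (x ^ 2 - 1))

/-- Perimeter of the regular hyperbolic `N`-gon of area `t`.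
(At `t = 0` this formula gives `0`, the degenerate polygon.) -/
noncomputable def Perim (N t : ℝ) : ℝ :=
  2 * N * _root_.arcosh (Real.cos (π / N) / Real.sin (((N - 2) * π - t) / (2 * N)))

lemma arcosh_mono {s t : ℝ} (hs : 1 ≤ s) (hst : s ≤ t) : _root_.arcosh s ≤ _root_.arcosh t := by
  unfold _root_.arcosh
  have h0 : 0 ≤ Real.sqrt (s ^ 2 - 1) := Real.sqrt_nonneg _
  refine Real.log_le_log (by linarith) ?_
  have : Real.sqrt (s ^ 2 - 1) ≤ Real.sqrt (t ^ 2 - 1) :=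
    Real.sqrt_le_sqrt (by nlinarith)
  linarith

lemma arcosh_add {u v : ℝ} (hu : 1 ≤ u) (hv : 1 ≤ v) :
    _root_.arcosh u + _root_.arcosh v = _root_.arcosh (u * v + Real.sqrt ((u ^ 2 - 1) * (v ^ 2 - 1))) := by
  have hu0 : 0 ≤ u ^ 2 - 1 := by nlinarith
  have hv0 : 0 ≤ v ^ 2 - 1 := by nlinarith
  set a := Real.sqrt (u ^ 2 - 1) with ha
  set b := Real.sqrt (v ^ 2 - 1) with hb
  have ha2 : a ^ 2 = u ^ 2 - 1 := Real.sq_sqrt hu0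
  have hb2 : b ^ 2 = v ^ 2 - 1 := Real.sq_sqrt hv0
  have ha0 : 0 ≤ a := Real.sqrt_nonneg _
  have hb0 : 0 ≤ b := Real.sqrt_nonneg _
  have hab : Real.sqrt ((u ^ 2 - 1) * (v ^ 2 - 1)) = a * b := Real.sqrt_mul hu0 _
  unfold _root_.arcosh
  rw [hab]
  have key : Real.sqrt ((u * v + a * b) ^ 2 - 1) = u * b + v * a := by
    have h : (u * v + a * b) ^ 2 - 1 = (u * b + v * a) ^ 2 := by
      linear_combination (b ^ 2 - v ^ 2) * ha2 - hb2
    rw [h]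
    exact Real.sqrt_sq (by nlinarith)
  rw [key, ← Real.log_mul (by nlinarith) (by nlinarith)]
  congr 1
  ring

lemma arcosh_double {u : ℝ} (hu : 1 ≤ u) : 2 * _root_.arcosh u = _root_.arcosh (2 * u ^ 2 - 1) := by
  have h := arcosh_add hu hu
  have h2 : Real.sqrt ((u ^ 2 - 1) * (u ^ 2 - 1)) = u ^ 2 - 1 :=
    Real.sqrt_mul_self (by nlinarith)
  rw [h2, show u * u + (u ^ 2 - 1) = 2 * u ^ 2 - 1 by ring] at h
  linarith

lemma cos_sq_sub_cos_sq' (α t : ℝ) :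
    Real.cos α ^ 2 - Real.cos (α + t) ^ 2 = Real.sin (2 * α + t) * Real.sin t := by
  have e3 : Real.sin t = Real.sin (α + t) * Real.cos α - Real.cos (α + t) * Real.sin α := by
    rw [← Real.sin_sub]; congr 1; ring
  have e4 : Real.sin (2 * α + t) = Real.sin (α + t) * Real.cos α + Real.cos (α + t) * Real.sin α := by
    rw [show 2 * α + t = (α + t) + α by ring, Real.sin_add]
  rw [e3, e4]
  have h1 := Real.sin_sq_add_cos_sq (α + t)
  have h2 := Real.sin_sq_add_cos_sq α
  nlinarith [h1, h2]

lemma cos_prod_sub (α p q : ℝ) :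
    Real.cos (α + p) * Real.cos (α + q) - Real.cos α * Real.cos (α + p + q)
      = Real.sin p * Real.sin q := by
  have e1 : Real.cos (α + q) = Real.cos α * Real.cos q - Real.sin α * Real.sin q :=
    Real.cos_add α q
  have e2 : Real.cos (α + p + q)
      = Real.cos (α + p) * Real.cos q - Real.sin (α + p) * Real.sin q := by
    rw [show α + p + q = (α + p) + q by ring, Real.cos_add]
  have e3 : Real.sin p = Real.sin (α + p) * Real.cos α - Real.cos (α + p) * Real.sin α := by
    rw [← Real.sin_sub]; congr 1; ring
  rw [e1, e2, e3]; ring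

lemma lemA {x : ℝ} (hx0 : 0 ≤ x) (hx : x < 2 * π) : Perim 8 x ≤ Perim 4 x := by
  have hπ := Real.pi_pos
  have r4 : Perim 4 x = 2 * 4 * _root_.arcosh (Real.cos (π / 4) / Real.cos (π / 4 + x / 8)) := by
    unfold Perim
    rw [show (((4 : ℝ) - 2) * π - x) / (2 * 4) = π / 2 - (π / 4 + x / 8) from by ring,
      Real.sin_pi_div_two_sub]
  have r8 : Perim 8 x = 2 * 8 * _root_.arcosh (Real.cos (π / 8) / Real.cos (π / 8 + x / 16)) := by
    unfold Perim
    rw [show (((8 : ℝ) - 2) * π - x) / (2 * 8) = π / 2 - (π / 8 + x / 16) from by ring,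
      Real.sin_pi_div_two_sub]
  rw [r4, r8]
  set c := Real.cos (π / 4 + x / 8) with hc
  set d := Real.cos (π / 8 + x / 16) with hd
  have hc0 : 0 < c := Real.cos_pos_of_mem_Ioo ⟨by linarith, by linarith⟩
  have hd0 : 0 < d := Real.cos_pos_of_mem_Ioo ⟨by linarith, by linarith⟩
  have hc1 : c ≤ Real.cos (π / 4) := by
    rw [hc]
    exact Real.cos_le_cos_of_nonneg_of_le_pi (by linarith) (by linarith) (by linarith)
  rw [Real.cos_pi_div_four] at hc1
  have hdK : d ≤ Real.cos (π / 8) := by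
    rw [hd]
    exact Real.cos_le_cos_of_nonneg_of_le_pi (by linarith) (by linarith) (by linarith)
  have hK0 : 0 < Real.cos (π / 8) := lt_of_lt_of_le hd0 hdK
  have hd2 : d ^ 2 = (1 + c) / 2 := by
    have h := Real.cos_two_mul (π / 8 + x / 16)
    rw [show 2 * (π / 8 + x / 16) = π / 4 + x / 8 from by ring] at h
    rw [← hc, ← hd] at h
    linarith
  have hS2 : Real.cos (π / 8) ^ 2 = 1 / 2 + Real.sqrt 2 / 4 := by
    have h := Real.cos_sq (π / 8)
    rw [show 2 * (π / 8) = π / 4 from by ring, Real.cos_pi_div_four] at h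
    linarith
  have sqrt2sq : Real.sqrt 2 ^ 2 = 2 := Real.sq_sqrt (by norm_num)
  have sqrt2nn : (0 : ℝ) ≤ Real.sqrt 2 := Real.sqrt_nonneg 2
  have hc1' : c ≤ 1 := by nlinarith
  have hu8 : 1 ≤ Real.cos (π / 8) / d := (one_le_div hd0).mpr hdK
  have main : 2 * (Real.cos (π / 8) / d) ^ 2 - 1 ≤ Real.cos (π / 4) / c := by
    rw [Real.cos_pi_div_four, div_pow, hd2, hS2]
    have h1c : (0 : ℝ) < 1 + c := by linarith
    have e : 2 * ((1 / 2 + Real.sqrt 2 / 4) / ((1 + c) / 2)) - 1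
        = (1 + Real.sqrt 2 - c) / (1 + c) := by
      field_simp; ring
    rw [e, div_le_div_iff₀ h1c hc0]
    nlinarith [mul_nonneg (by linarith : (0:ℝ) ≤ 1 - c)
      (by linarith : (0:ℝ) ≤ Real.sqrt 2 / 2 - c)]
  have h2u : 1 ≤ 2 * (Real.cos (π / 8) / d) ^ 2 - 1 := by nlinarith
  calc 2 * 8 * _root_.arcosh (Real.cos (π / 8) / d)
      = 8 * (2 * _root_.arcosh (Real.cos (π / 8) / d)) := by ring
    _ = 8 * _root_.arcosh (2 * (Real.cos (π / 8) / d) ^ 2 - 1) := by rw [arcosh_double hu8]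
    _ ≤ 8 * _root_.arcosh (Real.cos (π / 4) / c) := by
        have := arcosh_mono h2u main
        linarith
    _ = 2 * 4 * _root_.arcosh (Real.cos (π / 4) / c) := by ring

lemma aux1 {K s : ℝ} (hK0 : 0 ≤ K) (hK1 : K ≤ 1) (hs : 0 ≤ s) : K ^ 2 * s ≤ s := by
  nlinarith [mul_nonneg (mul_nonneg hs (by linarith : (0:ℝ) ≤ 1 - K))
    (by linarith : (0:ℝ) ≤ 1 + K)]

lemma aux2 {p q : ℝ} (hp : 0 ≤ p) (hq : 0 ≤ q) (hpq : p + q ≤ π / 8) : p * q ≤ 1 / 16 := by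
  have hpi4 : π ≤ 4 := Real.pi_le_four
  nlinarith [sq_nonneg (p - q)]

lemma aux3 {s1 s2 C : ℝ} (h1 : Real.sqrt 2 / 2 ≤ s1) (h2 : Real.sqrt 2 / 2 ≤ s2)
    (h3 : Real.sqrt 2 / 2 ≤ C) : 1 / 4 ≤ s1 * s2 * C ^ 2 := by
  have r2 : Real.sqrt 2 ^ 2 = 2 := Real.sq_sqrt (by norm_num)
  have rn : (0 : ℝ) ≤ Real.sqrt 2 := Real.sqrt_nonneg 2
  have hs1 : (0:ℝ) < Real.sqrt 2 / 2 := by nlinarith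
  have g1 : 1 / 2 ≤ s1 * s2 := by nlinarith
  have g2 : 1 / 2 ≤ C ^ 2 := by nlinarith
  nlinarith

lemma lemB {p q : ℝ} (hp : 0 ≤ p) (hq : 0 ≤ q) (hpq : p + q ≤ π / 8) :
    _root_.arcosh (Real.cos (π / 8) / Real.cos (π / 8 + (p + q))) ≤
      _root_.arcosh (Real.cos (π / 8) / Real.cos (π / 8 + p))
        + _root_.arcosh (Real.cos (π / 8) / Real.cos (π / 8 + q)) := by
  have hπ := Real.pi_pos
  have hp8 : p ≤ π / 8 := by linarith
  have hq8 : q ≤ π / 8 := by linarith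
  set K := Real.cos (π / 8) with hK
  set A := Real.cos (π / 8 + p) with hA
  set B := Real.cos (π / 8 + q) with hB
  set C := Real.cos (π / 8 + (p + q)) with hC
  clear_value K A B C
  have hA0 : 0 < A := by
    rw [hA]; exact Real.cos_pos_of_mem_Ioo ⟨by linarith, by linarith⟩
  have hB0 : 0 < B := by
    rw [hB]; exact Real.cos_pos_of_mem_Ioo ⟨by linarith, by linarith⟩
  have hC0 : 0 < C := by
    rw [hC]; exact Real.cos_pos_of_mem_Ioo ⟨by linarith, by linarith⟩
  have hAK : A ≤ K := by
    rw [hA, hK]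
    exact Real.cos_le_cos_of_nonneg_of_le_pi (by linarith) (by linarith) (by linarith)
  have hBK : B ≤ K := by
    rw [hB, hK]
    exact Real.cos_le_cos_of_nonneg_of_le_pi (by linarith) (by linarith) (by linarith)
  have hCK : C ≤ K := by
    rw [hC, hK]
    exact Real.cos_le_cos_of_nonneg_of_le_pi (by linarith) (by linarith) (by linarith)
  have hK0 : 0 < K := lt_of_lt_of_le hA0 hAK
  have hK1 : K ≤ 1 := by rw [hK]; exact Real.cos_le_one _
  have hu : 1 ≤ K / A := (one_le_div hA0).mpr hAK
  have hv : 1 ≤ K / B := (one_le_div hB0).mpr hBK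
  have hw : 1 ≤ K / C := (one_le_div hC0).mpr hCK
  rw [arcosh_add hu hv]
  -- trig quantities
  have hsp : 0 ≤ Real.sin p := Real.sin_nonneg_of_nonneg_of_le_pi hp (by linarith)
  have hsq : 0 ≤ Real.sin q := Real.sin_nonneg_of_nonneg_of_le_pi hq (by linarith)
  have hsp4 : 0 ≤ Real.sin (π / 4 + p) :=
    Real.sin_nonneg_of_nonneg_of_le_pi (by linarith) (by linarith)
  have hsq4 : 0 ≤ Real.sin (π / 4 + q) :=
    Real.sin_nonneg_of_nonneg_of_le_pi (by linarith) (by linarith)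
  have hA2 : (K / A) ^ 2 - 1 = Real.sin (π / 4 + p) * Real.sin p / A ^ 2 := by
    have h := cos_sq_sub_cos_sq' (π / 8) p
    rw [show 2 * (π / 8) + p = π / 4 + p from by ring, ← hK, ← hA] at h
    rw [div_pow, div_sub_one (by positivity : (A:ℝ) ^ 2 ≠ 0), h]
  have hB2 : (K / B) ^ 2 - 1 = Real.sin (π / 4 + q) * Real.sin q / B ^ 2 := by
    have h := cos_sq_sub_cos_sq' (π / 8) q
    rw [show 2 * (π / 8) + q = π / 4 + q from by ring, ← hK, ← hB] at h
    rw [div_pow, div_sub_one (by positivity : (B:ℝ) ^ 2 ≠ 0), h]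
  set M := Real.sin (π / 4 + p) * Real.sin p * (Real.sin (π / 4 + q) * Real.sin q) with hM
  clear_value M
  have hM0 : 0 ≤ M := by
    rw [hM]; exact mul_nonneg (mul_nonneg hsp4 hsp) (mul_nonneg hsq4 hsq)
  have hsqrt : Real.sqrt (((K / A) ^ 2 - 1) * ((K / B) ^ 2 - 1))
      = Real.sqrt M / (A * B) := by
    rw [hA2, hB2,
      show Real.sin (π / 4 + p) * Real.sin p / A ^ 2 * (Real.sin (π / 4 + q) * Real.sin q / B ^ 2)
        = M / (A * B) ^ 2 from by rw [hM]; ring,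
      Real.sqrt_div hM0, Real.sqrt_sq (mul_nonneg hA0.le hB0.le)]
  rw [hsqrt]
  refine arcosh_mono hw ?_
  -- key product-to-sum identity
  have key1 : A * B - K * C = Real.sin p * Real.sin q := by
    have h := cos_prod_sub (π / 8) p q
    rw [show π / 8 + p + q = π / 8 + (p + q) from by ring] at h
    rw [hA, hB, hK, hC]
    exact h
  -- numeric bounds
  have sqrt2sq : Real.sqrt 2 ^ 2 = 2 := Real.sq_sqrt (by norm_num)
  have sqrt2nn : (0 : ℝ) ≤ Real.sqrt 2 := Real.sqrt_nonneg 2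
  have b1 : Real.sin p ≤ p := Real.sin_le hp
  have b2 : Real.sin q ≤ q := Real.sin_le hq
  have hpi4 : π ≤ 4 := Real.pi_le_four
  have b4 : Real.sqrt 2 / 2 ≤ Real.sin (π / 4 + p) := by
    rw [show π / 4 + p = π / 2 - (π / 4 - p) from by ring, Real.sin_pi_div_two_sub]
    calc Real.sqrt 2 / 2 = Real.cos (π / 4) := Real.cos_pi_div_four.symm
      _ ≤ Real.cos (π / 4 - p) :=
          Real.cos_le_cos_of_nonneg_of_le_pi (by linarith) (by linarith) (by linarith)
  have b5 : Real.sqrt 2 / 2 ≤ Real.sin (π / 4 + q) := by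
    rw [show π / 4 + q = π / 2 - (π / 4 - q) from by ring, Real.sin_pi_div_two_sub]
    calc Real.sqrt 2 / 2 = Real.cos (π / 4) := Real.cos_pi_div_four.symm
      _ ≤ Real.cos (π / 4 - q) :=
          Real.cos_le_cos_of_nonneg_of_le_pi (by linarith) (by linarith) (by linarith)
  have b6 : Real.sqrt 2 / 2 ≤ C := by
    rw [hC]
    calc Real.sqrt 2 / 2 = Real.cos (π / 4) := Real.cos_pi_div_four.symm
      _ ≤ Real.cos (π / 8 + (p + q)) :=
          Real.cos_le_cos_of_nonneg_of_le_pi (by linarith) (by linarith) (by linarith)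
  -- main bound : K * (sin p * sin q) ≤ √M * C
  have hsq1 : K ^ 2 * (Real.sin p * Real.sin q)
      ≤ Real.sin (π / 4 + p) * Real.sin (π / 4 + q) * C ^ 2 := by
    have c1 : K ^ 2 * (Real.sin p * Real.sin q) ≤ Real.sin p * Real.sin q :=
      aux1 hK0.le hK1 (mul_nonneg hsp hsq)
    have c2 : Real.sin p * Real.sin q ≤ 1 / 4 := by
      have h1 : Real.sin p * Real.sin q ≤ p * q := mul_le_mul b1 b2 hsq hp
      have h2 : p * q ≤ 1 / 16 := aux2 hp hq hpq
      linarith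
    have c3 : (1 : ℝ) / 4 ≤ Real.sin (π / 4 + p) * Real.sin (π / 4 + q) * C ^ 2 :=
      aux3 b4 b5 b6
    linarith
  have bound : K * (Real.sin p * Real.sin q) ≤ Real.sqrt M * C := by
    have h1 : (K * (Real.sin p * Real.sin q)) ^ 2 ≤ M * C ^ 2 := by
      have := mul_le_mul_of_nonneg_right hsq1 (mul_nonneg hsp hsq)
      calc (K * (Real.sin p * Real.sin q)) ^ 2
          = K ^ 2 * (Real.sin p * Real.sin q) * (Real.sin p * Real.sin q) := by ring
        _ ≤ Real.sin (π / 4 + p) * Real.sin (π / 4 + q) * C ^ 2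
              * (Real.sin p * Real.sin q) := this
        _ = M * C ^ 2 := by rw [hM]; ring
    calc K * (Real.sin p * Real.sin q)
        = Real.sqrt ((K * (Real.sin p * Real.sin q)) ^ 2) :=
          (Real.sqrt_sq (mul_nonneg hK0.le (mul_nonneg hsp hsq))).symm
      _ ≤ Real.sqrt (M * C ^ 2) := Real.sqrt_le_sqrt h1
      _ = Real.sqrt M * C := by rw [Real.sqrt_mul hM0, Real.sqrt_sq hC0.le]
  -- assemble
  rw [div_mul_div_comm, ← add_div, div_le_div_iff₀ hC0 (mul_pos hA0 hB0)]
  have e : K * (A * B) = K * K * C + K * (Real.sin p * Real.sin q) := by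
    linear_combination K * key1
  have e2 : (K * K + Real.sqrt M) * C = K * K * C + Real.sqrt M * C := by ring
  linarith only [bound, e, e2]

theorem stmt_16 (a : ℝ) (ha0 : 0 < a) (ha1 : a < 6 * π) (ha2 : a ≤ 2 * π) :
    ∀ x ∈ Set.Ico 0 a, Perim 4 x + Perim 8 (a - x) ≥ Perim 8 a := by
  intro x hx
  obtain ⟨hx0, hxa⟩ := hx
  have hπ := Real.pi_pos
  have h1 : Perim 8 x ≤ Perim 4 x := lemA hx0 (lt_of_lt_of_le hxa ha2)
  have hrw : ∀ t : ℝ, Perim 8 t = 2 * 8 * _root_.arcosh (Real.cos (π / 8) / Real.cos (π / 8 + t / 16)) := by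
    intro t
    unfold Perim
    rw [show (((8 : ℝ) - 2) * π - t) / (2 * 8) = π / 2 - (π / 8 + t / 16) from by ring,
      Real.sin_pi_div_two_sub]
  have h2 : Perim 8 a ≤ Perim 8 x + Perim 8 (a - x) := by
    rw [hrw a, hrw x, hrw (a - x)]
    have hB := lemB (p := x / 16) (q := (a - x) / 16) (by linarith) (by linarith)
      (by linarith)
    rw [show x / 16 + (a - x) / 16 = a / 16 from by ring] at hB
    linarith
  linarith
end

section
/- Let m ≥ 2 be an integer, a ∈ (0, (2m−2)π), and n ≥ 2m an integer. Define f_{m,n}(x) = Perim_{2m}(x) + Perim_{2(n+2−m)}(a − x) for x ∈ [0, a), where Perim_N(t) = 2N·arcosh(cos(π/N)/sin(((N−2)π − t)/(2N))) and Perim_N(0) = 0. If f_{m,n₀} attains its minimum on [0,a) at x = 0 for some n₀, then f_{m,k} attains its minimum at x = 0 for every integer k ≥ n₀. -/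
open Real

noncomputable def f (m n : ℕ) (a x : ℝ) : ℝ :=
  Perim (2 * m) x + Perim (2 * (n + 2 - m)) (a - x)

section Aux
open Set

lemma ycos_le_sin {y : ℝ} (h0 : 0 < y) (hπ : y < π) : y * Real.cos y ≤ Real.sin y := by
  rcases lt_or_ge y (π/2) with h | h
  · have ht := Real.lt_tan h0 h
    have hc : 0 < Real.cos y := Real.cos_pos_of_mem_Ioo ⟨by linarith, h⟩
    rw [Real.tan_eq_sin_div_cos, lt_div_iff₀ hc] at ht
    linarith
  · have hc : Real.cos y ≤ 0 := Real.cos_nonpos_of_pi_div_two_le_of_le h (by linarith [Real.pi_pos])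
    have hs : 0 ≤ Real.sin y := Real.sin_nonneg_of_nonneg_of_le_pi h0.le hπ.le
    nlinarith

lemma hasDerivAt_h {y : ℝ} (hs : Real.sin y ≠ 0) :
    HasDerivAt (fun y => y * Real.cos y / Real.sin y)
      ((Real.cos y * Real.sin y - y) / Real.sin y ^ 2) y := by
  have h1 : HasDerivAt (fun y : ℝ => y * Real.cos y) (1 * Real.cos y + y * (-Real.sin y)) y :=
    (hasDerivAt_id y).mul (Real.hasDerivAt_cos y)
  have h2 := h1.div (Real.hasDerivAt_sin y) hs
  refine h2.congr_deriv (Eq.symm ?_)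
  have := Real.sin_sq_add_cos_sq y
  field_simp
  linear_combination y * this

lemma hasDerivAt_h' {y : ℝ} (hs : Real.sin y ≠ 0) :
    HasDerivAt (fun y => (Real.cos y * Real.sin y - y) / Real.sin y ^ 2)
      (2 * (y * Real.cos y - Real.sin y) / Real.sin y ^ 3) y := by
  have h1 : HasDerivAt (fun y : ℝ => Real.cos y * Real.sin y - y)
      ((-Real.sin y) * Real.sin y + Real.cos y * Real.cos y - 1) y :=
    ((Real.hasDerivAt_cos y).mul (Real.hasDerivAt_sin y)).sub (hasDerivAt_id y)
  have h2 : HasDerivAt (fun y : ℝ => Real.sin y ^ 2) (2 * Real.sin y ^ 1 * Real.cos y) y :=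
    (Real.hasDerivAt_sin y).pow 2
  have h3 := h1.div h2 (pow_ne_zero 2 hs)
  refine h3.congr_deriv (Eq.symm ?_)
  have hpy := Real.sin_sq_add_cos_sq y
  field_simp
  linear_combination (Real.sin y) * hpy

lemma concave_h : ConcaveOn ℝ (Ioo 0 π) (fun y => y * Real.cos y / Real.sin y) := by
  have hI : interior (Ioo (0:ℝ) π) = Ioo 0 π := isOpen_Ioo.interior_eq
  have hsin : ∀ y ∈ Ioo (0:ℝ) π, Real.sin y ≠ 0 := fun y hy =>
    (Real.sin_pos_of_pos_of_lt_pi hy.1 hy.2).ne'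
  apply concaveOn_of_hasDerivWithinAt2_nonpos (convex_Ioo 0 π)
    (f' := fun y => (Real.cos y * Real.sin y - y) / Real.sin y ^ 2)
    (f'' := fun y => 2 * (y * Real.cos y - Real.sin y) / Real.sin y ^ 3)
  · exact fun y hy => (hasDerivAt_h (hsin y hy)).continuousAt.continuousWithinAt
  · rw [hI]; exact fun y hy => (hasDerivAt_h (hsin y hy)).hasDerivWithinAt
  · rw [hI]; exact fun y hy => (hasDerivAt_h' (hsin y hy)).hasDerivWithinAt
  · rw [hI]
    intro y hy
    have hs := Real.sin_pos_of_pos_of_lt_pi hy.1 hy.2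
    have := ycos_le_sin hy.1 hy.2
    apply div_nonpos_of_nonpos_of_nonneg <;> nlinarith [pow_pos hs 3]

lemma cot_midpoint {u v : ℝ} (hu : 0 < u) (hv : v < π) (huv : u ≤ v) :
    u * Real.cos u / Real.sin u + v * Real.cos v / Real.sin v ≤
      2 * ((u + v) / 2 * Real.cos ((u + v) / 2) / Real.sin ((u + v) / 2)) := by
  have h1 : u ∈ Ioo (0:ℝ) π := ⟨hu, by linarith⟩
  have h2 : v ∈ Ioo (0:ℝ) π := ⟨by linarith, hv⟩
  have := concave_h.2 h1 h2 (by norm_num : (0:ℝ) ≤ 1/2) (by norm_num : (0:ℝ) ≤ 1/2) (by norm_num)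
  simp only [smul_eq_mul] at this
  have he : (1:ℝ)/2 * u + 1/2 * v = (u+v)/2 := by ring
  rw [he] at this
  linarith
noncomputable def S (l b : ℝ) : ℝ :=
  2 * Real.log (Real.cos b) + 2 * Real.log (Real.sin (l * b)) - 2 * Real.log (Real.cos (l * b))
    - Real.log (Real.sin ((l + 1) * b)) - Real.log (Real.sin ((l - 1) * b))

noncomputable def S' (l b : ℝ) : ℝ :=
  2 * (-Real.sin b / Real.cos b) + 2 * (l * Real.cos (l * b) / Real.sin (l * b))
    + 2 * (l * Real.sin (l * b) / Real.cos (l * b))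
    - (l + 1) * Real.cos ((l + 1) * b) / Real.sin ((l + 1) * b)
    - (l - 1) * Real.cos ((l - 1) * b) / Real.sin ((l - 1) * b)

lemma bounds {l b : ℝ} (hl : 1 < l) (hb : 0 < b) (hlb : l * b < π / 2) :
    0 < Real.cos b ∧ 0 < Real.sin (l * b) ∧ 0 < Real.cos (l * b) ∧
      0 < Real.sin ((l + 1) * b) ∧ 0 < Real.sin ((l - 1) * b) := by
  have hpi := Real.pi_pos
  have hblt : b < π / 2 := by nlinarith
  have hlb0 : 0 < l * b := by nlinarith
  refine ⟨Real.cos_pos_of_mem_Ioo ⟨by linarith, hblt⟩,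
    Real.sin_pos_of_pos_of_lt_pi hlb0 (by linarith),
    Real.cos_pos_of_mem_Ioo ⟨by linarith, hlb⟩,
    Real.sin_pos_of_pos_of_lt_pi (by nlinarith) (by nlinarith),
    Real.sin_pos_of_pos_of_lt_pi (by nlinarith) (by nlinarith)⟩

lemma S_hasDerivAt {l b : ℝ} (hl : 1 < l) (hb : 0 < b) (hlb : l * b < π / 2) :
    HasDerivAt (S l) (S' l b) b := by
  obtain ⟨h1, h2, h3, h4, h5⟩ := bounds hl hb hlb
  have dcosb : HasDerivAt (fun b : ℝ => Real.log (Real.cos b)) (-Real.sin b / Real.cos b) b := by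
    simpa [div_eq_mul_inv, mul_comm] using (Real.hasDerivAt_cos b).log h1.ne'
  have dlb : ∀ c : ℝ, HasDerivAt (fun b : ℝ => c * b) c b := by
    intro c; simpa using (hasDerivAt_id b).const_mul c
  have dsin : ∀ c : ℝ, 0 < Real.sin (c * b) →
      HasDerivAt (fun b : ℝ => Real.log (Real.sin (c * b)))
        (c * Real.cos (c * b) / Real.sin (c * b)) b := by
    intro c hc
    have := (((Real.hasDerivAt_sin (c * b)).comp b (dlb c)).log hc.ne')
    refine this.congr_deriv (Eq.symm ?_); simp only [Function.comp_apply]; ring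
  have dcoslb : HasDerivAt (fun b : ℝ => Real.log (Real.cos (l * b)))
      (-(l * Real.sin (l * b)) / Real.cos (l * b)) b := by
    have := (((Real.hasDerivAt_cos (l * b)).comp b (dlb l)).log h3.ne')
    refine this.congr_deriv (Eq.symm ?_); simp only [Function.comp_apply]; ring
  have := ((((dcosb.const_mul 2).add ((dsin l h2).const_mul 2)).sub
      (dcoslb.const_mul 2)).sub (dsin (l + 1) h4)).sub (dsin (l - 1) h5)
  refine this.congr_deriv (Eq.symm ?_)
  unfold S' ; ring

lemma S'_nonneg {l b : ℝ} (hl : 1 < l) (hb : 0 < b) (hlb : l * b < π / 2) : 0 ≤ S' l b := by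
  obtain ⟨h1, h2, h3, h4, h5⟩ := bounds hl hb hlb
  have hpi := Real.pi_pos
  -- midpoint concavity part
  have hu : (0:ℝ) < (l - 1) * b := by nlinarith
  have hv : (l + 1) * b < π := by nlinarith
  have huv : (l - 1) * b ≤ (l + 1) * b := by nlinarith
  have hmid := cot_midpoint hu hv huv
  have hmide : ((l - 1) * b + (l + 1) * b) / 2 = l * b := by ring
  rw [hmide] at hmid
  -- tan part : sin b / cos b ≤ l * sin(lb)/cos(lb)
  have htan : Real.sin b / Real.cos b ≤ l * Real.sin (l * b) / Real.cos (l * b) := by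
    have hblt : b < π/2 := by nlinarith
    have h0 : Real.tan b ≤ Real.tan (l * b) := by
      rcases eq_or_lt_of_le (show b ≤ l * b by nlinarith) with h | h
      · exact le_of_eq (congrArg Real.tan h)
      · exact (Real.tan_lt_tan_of_nonneg_of_lt_pi_div_two hb.le hlb h).le
    rw [Real.tan_eq_sin_div_cos, Real.tan_eq_sin_div_cos] at h0
    have : Real.sin (l * b) / Real.cos (l * b) ≤ l * Real.sin (l * b) / Real.cos (l * b) := by
      have : 0 ≤ Real.sin (l * b) / Real.cos (l * b) := by positivity
      rw [mul_div_assoc]; nlinarith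
    linarith
  -- combine : S' = 2*(l tan lb - tan b) + (2 l cot lb - (l+1)cot((l+1)b) - (l-1)cot((l-1)b))
  unfold S'
  have e1 : (l - 1) * b * Real.cos ((l - 1) * b) / Real.sin ((l - 1) * b)
      = b * ((l - 1) * Real.cos ((l - 1) * b) / Real.sin ((l - 1) * b)) := by ring
  have e2 : (l + 1) * b * Real.cos ((l + 1) * b) / Real.sin ((l + 1) * b)
      = b * ((l + 1) * Real.cos ((l + 1) * b) / Real.sin ((l + 1) * b)) := by ring
  have e3 : 2 * (l * b * Real.cos (l * b) / Real.sin (l * b))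
      = b * (2 * (l * Real.cos (l * b) / Real.sin (l * b))) := by ring
  rw [e1, e2, e3] at hmid
  have hcot : (l + 1) * Real.cos ((l + 1) * b) / Real.sin ((l + 1) * b)
      + (l - 1) * Real.cos ((l - 1) * b) / Real.sin ((l - 1) * b)
      ≤ 2 * (l * Real.cos (l * b) / Real.sin (l * b)) := by
    have := (mul_le_mul_iff_right₀ hb).mp (by linarith : b * ((l + 1) * Real.cos ((l + 1) * b) / Real.sin ((l + 1) * b) + (l - 1) * Real.cos ((l - 1) * b) / Real.sin ((l - 1) * b)) ≤ b * (2 * (l * Real.cos (l * b) / Real.sin (l * b))))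
    linarith
  have : -Real.sin b / Real.cos b = -(Real.sin b / Real.cos b) := by ring
  linarith [htan]

noncomputable def pd (N t : ℝ) : ℝ :=
  Real.cos (π / N) * Real.cos (((N - 2) * π - t) / (2 * N)) /
    (Real.sin (((N - 2) * π - t) / (2 * N)) *
      Real.sqrt (Real.cos (π / N) ^ 2 - Real.sin (((N - 2) * π - t) / (2 * N)) ^ 2))

lemma hasDerivAt_arcosh {x : ℝ} (hx : 1 < x) :
    HasDerivAt _root_.arcosh (1 / Real.sqrt (x ^ 2 - 1)) x := by
  have hx2 : (0:ℝ) < x ^ 2 - 1 := by nlinarith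
  have hs : 0 < Real.sqrt (x ^ 2 - 1) := Real.sqrt_pos.2 hx2
  have d1 : HasDerivAt (fun x : ℝ => x ^ 2 - 1) (2 * x) x := by
    simpa using (hasDerivAt_pow 2 x).sub_const 1
  have d2 : HasDerivAt (fun x : ℝ => Real.sqrt (x ^ 2 - 1))
      (1 / (2 * Real.sqrt (x ^ 2 - 1)) * (2 * x)) x :=
    (Real.hasDerivAt_sqrt hx2.ne').comp x d1
  have d3 : HasDerivAt (fun x : ℝ => x + Real.sqrt (x ^ 2 - 1))
      (1 + 1 / (2 * Real.sqrt (x ^ 2 - 1)) * (2 * x)) x := (hasDerivAt_id x).add d2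
  have hpos : 0 < x + Real.sqrt (x ^ 2 - 1) := by positivity
  have d4 := d3.log hpos.ne'
  have : _root_.arcosh = fun x : ℝ => Real.log (x + Real.sqrt (x ^ 2 - 1)) := rfl
  rw [this]
  convert d4 using 1
  have hsq : Real.sqrt (x ^ 2 - 1) ^ 2 = x ^ 2 - 1 := Real.sq_sqrt hx2.le
  field_simp
  ring

lemma theta_bounds {N t : ℝ} (hN : 8 ≤ N) (ht : 0 ≤ t) (ht2 : t < (N - 2) * π) :
    0 < ((N - 2) * π - t) / (2 * N) ∧ ((N - 2) * π - t) / (2 * N) ≤ π / 2 - π / N ∧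
      0 < Real.sin (((N - 2) * π - t) / (2 * N)) ∧
      Real.sin (((N - 2) * π - t) / (2 * N)) ≤ Real.cos (π / N) ∧
      0 < Real.cos (π / N) ∧ 0 < Real.cos (((N - 2) * π - t) / (2 * N)) ∧
      (0 < t → Real.sin (((N - 2) * π - t) / (2 * N)) < Real.cos (π / N)) := by
  have hpi := Real.pi_pos
  have hN0 : (0:ℝ) < N := by linarith
  have h2N : (0:ℝ) < 2 * N := by linarith
  have hθ1 : 0 < ((N - 2) * π - t) / (2 * N) := div_pos (by linarith) h2N
  have hhalf : π / 2 - π / N = (N - 2) * π / (2 * N) := by field_simp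
  have hθ2 : ((N - 2) * π - t) / (2 * N) ≤ π / 2 - π / N := by
    rw [hhalf]
    gcongr
    linarith
  have hs1 : 0 < Real.sin (((N - 2) * π - t) / (2 * N)) :=
    Real.sin_pos_of_pos_of_lt_pi hθ1 (by nlinarith [Real.pi_pos, div_pos Real.pi_pos hN0])
  have hmem1 : ((N - 2) * π - t) / (2 * N) ∈ Icc (-(π/2)) (π/2) :=
    ⟨by linarith, by linarith [div_pos Real.pi_pos hN0]⟩
  have hmem2 : π / 2 - π / N ∈ Icc (-(π/2)) (π/2) := by
    constructor <;> nlinarith [div_pos Real.pi_pos hN0]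
  have hs2 : Real.sin (((N - 2) * π - t) / (2 * N)) ≤ Real.cos (π / N) := by
    rw [← Real.sin_pi_div_two_sub]
    exact Real.strictMonoOn_sin.monotoneOn hmem1 hmem2 hθ2
  have hcN : 0 < Real.cos (π / N) := by
    apply Real.cos_pos_of_mem_Ioo
    constructor
    · nlinarith [div_pos Real.pi_pos hN0]
    · rw [div_lt_iff₀ hN0]; nlinarith
  have hcθ : 0 < Real.cos (((N - 2) * π - t) / (2 * N)) := by
    apply Real.cos_pos_of_mem_Ioo
    refine ⟨by linarith, by nlinarith [div_pos Real.pi_pos hN0]⟩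
  refine ⟨hθ1, hθ2, hs1, hs2, hcN, hcθ, fun htpos => ?_⟩
  rw [← Real.sin_pi_div_two_sub]
  apply Real.strictMonoOn_sin hmem1 hmem2
  rw [hhalf]
  gcongr
  linarith

lemma perim_hasDerivAt {N t : ℝ} (hN : 8 ≤ N) (ht : 0 < t) (ht2 : t < (N - 2) * π) :
    HasDerivAt (fun t => Perim N t) (pd N t) t := by
  obtain ⟨hθ1, hθ2, hs1, hs2, hcN, hcθ, hstrict⟩ := theta_bounds hN ht.le ht2
  have hslt := hstrict ht
  have hpi := Real.pi_pos
  have hN0 : (0:ℝ) < N := by linarith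
  set c := Real.cos (π / N) with hc
  set θt := ((N - 2) * π - t) / (2 * N) with hθt
  have dθ : HasDerivAt (fun s : ℝ => ((N - 2) * π - s) / (2 * N)) (-1 / (2 * N)) t := by
    have : HasDerivAt (fun s : ℝ => (N - 2) * π - s) (0 - 1) t :=
      (hasDerivAt_const t ((N - 2) * π)).sub (hasDerivAt_id t)
    simpa [neg_div] using this.div_const (2 * N)
  have dsinθ : HasDerivAt (fun s : ℝ => Real.sin (((N - 2) * π - s) / (2 * N)))
      (Real.cos θt * (-1 / (2 * N))) t := HasDerivAt.comp (h₂ := Real.sin) t (Real.hasDerivAt_sin θt) dθ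
  have du : HasDerivAt (fun s : ℝ => c / Real.sin (((N - 2) * π - s) / (2 * N)))
      ((0 * Real.sin θt - c * (Real.cos θt * (-1 / (2 * N)))) / Real.sin θt ^ 2) t :=
    (hasDerivAt_const t c).div dsinθ hs1.ne'
  have hu : 1 < c / Real.sin θt := (one_lt_div hs1).2 hslt
  have darc := (_root_.hasDerivAt_arcosh hu).comp t du
  have dfin := darc.const_mul (2 * N)
  have hD : 0 < c ^ 2 - Real.sin θt ^ 2 := by nlinarith
  have hsD : 0 < Real.sqrt (c ^ 2 - Real.sin θt ^ 2) := Real.sqrt_pos.2 hD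
  have hsqrt : Real.sqrt ((c / Real.sin θt) ^ 2 - 1)
      = Real.sqrt (c ^ 2 - Real.sin θt ^ 2) / Real.sin θt := by
    have h1 : (c / Real.sin θt) ^ 2 - 1 = (c ^ 2 - Real.sin θt ^ 2) / Real.sin θt ^ 2 := by
      field_simp
    rw [h1, Real.sqrt_div hD.le, Real.sqrt_sq hs1.le]
  refine dfin.congr_deriv (Eq.symm ?_)
  rw [hsqrt]
  show c * Real.cos θt / (Real.sin θt * Real.sqrt (c ^ 2 - Real.sin θt ^ 2)) = _
  field_simp
  ring

lemma exp_S {l b : ℝ} (hl : 1 < l) (hb : 0 < b) (hlb : l * b < π / 2) :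
    Real.exp (S l b) = Real.cos b ^ 2 * Real.sin (l * b) ^ 2 /
      (Real.cos (l * b) ^ 2 * (Real.sin (l * b) ^ 2 - Real.sin b ^ 2)) := by
  obtain ⟨h1, h2, h3, h4, h5⟩ := bounds hl hb hlb
  have key : Real.sin ((l + 1) * b) * Real.sin ((l - 1) * b)
      = Real.sin (l * b) ^ 2 - Real.sin b ^ 2 := by
    rw [show (l + 1) * b = l * b + b by ring, show (l - 1) * b = l * b - b by ring,
      Real.sin_add, Real.sin_sub]
    linear_combination (Real.sin (l * b)) ^ 2 * (Real.sin_sq_add_cos_sq b)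
      - (Real.sin b) ^ 2 * (Real.sin_sq_add_cos_sq (l * b))
  rw [← key]
  unfold S
  have e2 : ∀ x : ℝ, 0 < x → Real.exp (2 * Real.log x) = x ^ 2 := by
    intro x hx
    rw [two_mul, Real.exp_add, Real.exp_log hx]; ring
  rw [sub_sub, sub_sub, Real.exp_sub, Real.exp_add, Real.exp_add, Real.exp_add,
    e2 _ h1, e2 _ h2, e2 _ h3, Real.exp_log h4, Real.exp_log h5]

lemma S_le {l b₁ b₂ : ℝ} (hl : 1 < l) (h2 : 0 < b₂) (h21 : b₂ ≤ b₁) (h1 : l * b₁ < π / 2) :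
    S l b₂ ≤ S l b₁ := by
  have hl0 : (0:ℝ) < l := by linarith
  have hmono : MonotoneOn (S l) (Icc b₂ b₁) := by
    apply monotoneOn_of_deriv_nonneg (convex_Icc _ _)
    · intro x hx
      have hx0 : 0 < x := lt_of_lt_of_le h2 hx.1
      have hxl : l * x < π / 2 := lt_of_le_of_lt (by nlinarith [hx.2] : l * x ≤ l * b₁) h1
      exact (S_hasDerivAt hl hx0 hxl).continuousAt.continuousWithinAt
    · rw [interior_Icc]
      intro x hx
      have hx0 : 0 < x := h2.trans hx.1
      have hxl : l * x < π / 2 := lt_of_le_of_lt (by nlinarith [hx.2.le] : l * x ≤ l * b₁) h1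
      exact (S_hasDerivAt hl hx0 hxl).differentiableAt.differentiableWithinAt
    · rw [interior_Icc]
      intro x hx
      have hx0 : 0 < x := h2.trans hx.1
      have hxl : l * x < π / 2 := lt_of_le_of_lt (by nlinarith [hx.2.le] : l * x ≤ l * b₁) h1
      rw [(S_hasDerivAt hl hx0 hxl).deriv]
      exact S'_nonneg hl hx0 hxl
  exact hmono (left_mem_Icc.2 h21) (right_mem_Icc.2 h21) h21

lemma pd_nonneg {N t : ℝ} (hN : 8 ≤ N) (ht : 0 ≤ t) (ht2 : t < (N - 2) * π) :
    0 ≤ pd N t := by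
  obtain ⟨hθ1, hθ2, hs1, hs2, hcN, hcθ, _⟩ := theta_bounds hN ht ht2
  unfold pd
  have := Real.sqrt_nonneg (Real.cos (π / N) ^ 2 - Real.sin (((N - 2) * π - t) / (2 * N)) ^ 2)
  positivity

lemma pd_sq {N t : ℝ} (hN : 8 ≤ N) (ht : 0 < t) (ht2 : t < (N - 2) * π) :
    pd N t ^ 2 = Real.exp (S (1 + t / (2 * π)) (π / N)) := by
  have hpi := Real.pi_pos
  have hN0 : (0:ℝ) < N := by linarith
  have hl : 1 < 1 + t / (2 * π) := by
    have : 0 < t / (2 * π) := by positivity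
    linarith
  have hb : 0 < π / N := by positivity
  have hlb : (1 + t / (2 * π)) * (π / N) < π / 2 := by
    have he : (1 + t / (2 * π)) * (π / N) = (2 * π + t) / (2 * N) := by field_simp
    rw [he, div_lt_div_iff₀ (by linarith) (by norm_num)]
    nlinarith
  rw [exp_S hl hb hlb]
  have hθeq : ((N - 2) * π - t) / (2 * N) = π / 2 - (1 + t / (2 * π)) * (π / N) := by
    field_simp; ring
  have hblt : π / N < (1 + t / (2 * π)) * (π / N) := by
    nlinarith [div_pos hpi hN0]
  have hlbpos : 0 < (1 + t / (2 * π)) * (π / N) := by positivity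
  have hcc : Real.cos ((1 + t / (2 * π)) * (π / N)) < Real.cos (π / N) :=
    Real.cos_lt_cos_of_nonneg_of_le_pi hb.le (by linarith) hblt
  have hclb : 0 < Real.cos ((1 + t / (2 * π)) * (π / N)) :=
    Real.cos_pos_of_mem_Ioo ⟨by linarith, hlb⟩
  have hD : Real.cos (π / N) ^ 2 - Real.cos ((1 + t / (2 * π)) * (π / N)) ^ 2
      = Real.sin ((1 + t / (2 * π)) * (π / N)) ^ 2 - Real.sin (π / N) ^ 2 := by
    linear_combination Real.sin_sq_add_cos_sq (π / N)
      - Real.sin_sq_add_cos_sq ((1 + t / (2 * π)) * (π / N))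
  have hDpos : 0 ≤ Real.cos (π / N) ^ 2 - Real.cos ((1 + t / (2 * π)) * (π / N)) ^ 2 := by
    nlinarith
  unfold pd
  rw [hθeq, Real.sin_pi_div_two_sub, Real.cos_pi_div_two_sub]
  rw [div_pow, mul_pow, mul_pow, Real.sq_sqrt hDpos, hD]

lemma pd_mono {N₁ N₂ t : ℝ} (h8 : 8 ≤ N₁) (hN : N₁ ≤ N₂) (ht : 0 < t)
    (ht2 : t < (N₁ - 2) * π) : pd N₂ t ≤ pd N₁ t := by
  have hpi := Real.pi_pos
  have ht2' : t < (N₂ - 2) * π := by nlinarith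
  have hsq : pd N₂ t ^ 2 ≤ pd N₁ t ^ 2 := by
    rw [pd_sq (le_trans h8 hN) ht ht2', pd_sq h8 ht ht2]
    apply Real.exp_le_exp.2
    apply S_le
    · have : 0 < t / (2 * π) := by positivity
      linarith
    · exact div_pos hpi (by linarith)
    · exact div_le_div_of_nonneg_left hpi.le (by linarith) hN
    · have he : (1 + t / (2 * π)) * (π / N₁) = (2 * π + t) / (2 * N₁) := by
        field_simp
      rw [he, div_lt_div_iff₀ (by linarith) (by norm_num)]
      nlinarith
  calc pd N₂ t = Real.sqrt (pd N₂ t ^ 2) := (Real.sqrt_sq (pd_nonneg (h8.trans hN) ht.le ht2')).symm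
    _ ≤ Real.sqrt (pd N₁ t ^ 2) := Real.sqrt_le_sqrt hsq
    _ = pd N₁ t := Real.sqrt_sq (pd_nonneg h8 ht.le ht2)

lemma perim_continuousOn {N a : ℝ} (hN : 8 ≤ N) (ha : 0 < a) (ha2 : a < (N - 2) * π) :
    ContinuousOn (fun t => Perim N t) (Icc 0 a) := by
  have hθc : Continuous (fun t : ℝ => ((N - 2) * π - t) / (2 * N)) := by fun_prop
  have hsinne : ∀ t ∈ Icc (0:ℝ) a, Real.sin (((N - 2) * π - t) / (2 * N)) ≠ 0 := by
    intro t ht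
    exact (theta_bounds hN ht.1 (lt_of_le_of_lt ht.2 ha2)).2.2.1.ne'
  have hu : ContinuousOn (fun t : ℝ => Real.cos (π / N) /
      Real.sin (((N - 2) * π - t) / (2 * N))) (Icc 0 a) :=
    continuousOn_const.div ((Real.continuous_sin.comp hθc).continuousOn) hsinne
  have harg : ContinuousOn (fun t : ℝ =>
      Real.cos (π / N) / Real.sin (((N - 2) * π - t) / (2 * N)) +
      Real.sqrt ((Real.cos (π / N) / Real.sin (((N - 2) * π - t) / (2 * N))) ^ 2 - 1))
      (Icc 0 a) :=
    hu.add (Real.continuous_sqrt.comp_continuousOn ((hu.pow 2).sub continuousOn_const))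
  have hargpos : ∀ t ∈ Icc (0:ℝ) a,
      Real.cos (π / N) / Real.sin (((N - 2) * π - t) / (2 * N)) +
      Real.sqrt ((Real.cos (π / N) / Real.sin (((N - 2) * π - t) / (2 * N))) ^ 2 - 1) ≠ 0 := by
    intro t ht
    obtain ⟨_, _, hs1, _, hcN, _, _⟩ := theta_bounds hN ht.1 (lt_of_le_of_lt ht.2 ha2)
    have h1 : 0 < Real.cos (π / N) / Real.sin (((N - 2) * π - t) / (2 * N)) :=
      div_pos hcN hs1
    have h2 := Real.sqrt_nonneg
      ((Real.cos (π / N) / Real.sin (((N - 2) * π - t) / (2 * N))) ^ 2 - 1)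
    positivity
  show ContinuousOn (fun t => 2 * N * _root_.arcosh _) (Icc 0 a)
  unfold _root_.arcosh
  exact continuousOn_const.mul (harg.log hargpos)

lemma diff_antitone {N₁ N₂ a : ℝ} (h8 : 8 ≤ N₁) (hN : N₁ ≤ N₂) (ha : 0 < a)
    (ha2 : a < (N₁ - 2) * π) :
    AntitoneOn (fun t => Perim N₂ t - Perim N₁ t) (Icc 0 a) := by
  have hpi := Real.pi_pos
  have ha2' : a < (N₂ - 2) * π := by nlinarith
  apply antitoneOn_of_deriv_nonpos (convex_Icc _ _)
  · exact (perim_continuousOn (h8.trans hN) ha ha2').sub (perim_continuousOn h8 ha ha2)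
  · rw [interior_Icc]
    intro t ht
    exact ((perim_hasDerivAt (h8.trans hN) ht.1 (lt_trans ht.2 ha2')).sub
      (perim_hasDerivAt h8 ht.1 (lt_trans ht.2 ha2))).differentiableAt.differentiableWithinAt
  · rw [interior_Icc]
    intro t ht
    rw [HasDerivAt.deriv (f := fun t => Perim N₂ t - Perim N₁ t) ((perim_hasDerivAt (h8.trans hN) ht.1 (lt_trans ht.2 ha2')).sub
      (perim_hasDerivAt h8 ht.1 (lt_trans ht.2 ha2)))]
    exact sub_nonpos.2 (pd_mono h8 hN ht.1 (lt_trans ht.2 ha2))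

end Aux

section Aux2
open Set

theorem stmt_17 (m : ℕ) (hm : 2 ≤ m) (a : ℝ)
    (ha : a ∈ Set.Ioo 0 ((2 * (m : ℝ) - 2) * π))
    (n₀ : ℕ) (hn₀ : 2 * m ≤ n₀)
    (hmin : ∀ x ∈ Set.Ico (0 : ℝ) a, f m n₀ a 0 ≤ f m n₀ a x) :
    ∀ k : ℕ, n₀ ≤ k → ∀ x ∈ Set.Ico (0 : ℝ) a, f m k a 0 ≤ f m k a x := by
  intro k hk x hx
  obtain ⟨hx0, hxa⟩ := hx
  obtain ⟨ha0, ha1⟩ := ha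
  have hpi := Real.pi_pos
  have hmr : (2:ℝ) ≤ (m:ℝ) := by exact_mod_cast hm
  have hn0r : 2 * (m:ℝ) ≤ (n₀:ℝ) := by exact_mod_cast hn₀
  have hkr : (n₀:ℝ) ≤ (k:ℝ) := by exact_mod_cast hk
  have h8 : (8:ℝ) ≤ 2 * ((n₀:ℝ) + 2 - (m:ℝ)) := by linarith
  have hM : 2 * ((n₀:ℝ) + 2 - (m:ℝ)) ≤ 2 * ((k:ℝ) + 2 - (m:ℝ)) := by linarith
  have ha2 : a < (2 * ((n₀:ℝ) + 2 - (m:ℝ)) - 2) * π := by nlinarith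
  have hanti := diff_antitone h8 hM ha0 ha2
  have hmem1 : a - x ∈ Icc (0:ℝ) a := ⟨by linarith, by linarith⟩
  have hmem2 : a ∈ Icc (0:ℝ) a := ⟨ha0.le, le_refl a⟩
  have key := hanti hmem1 hmem2 (by linarith)
  simp only at key
  have hm0 := hmin x ⟨hx0, hxa⟩
  simp only [f, sub_zero] at hm0 ⊢
  linarith

end Aux2
end
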